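/- arXiv:2103.05143 — 7 statements merged into one kernel-verified Lean document; each statement's English description precedes it below -/
import Mathlib

section
/- Let 0 < a_1 ≤ … ≤ a_d be real numbers and let Ω = {ζ ∈ ℝ^d : ∑_{i=1}^d ζ_i/a_i < 1} be the corresponding open half-space. Then {(z,t) ∈ ℝ^d × ℝ : t + ⟨z, ζ⟩ ≥ 0 for all ζ ∈ Ω} = {(z,t) : ∃ s ∈ [0,t], z_i = −s/a_i for all i}. Consequently, for every T ≥ 0, max{I(z) : z ∈ ℝ^d, t + ⟨z,ζ⟩ ≥ 0 for all ζ ∈ Ω with t = T} = ∑_{i=1}^d ⌊T/a_i⌋. -/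
open scoped BigOperators

lemma key_stmt4 (d : ℕ) (hd : 1 ≤ d) (a : Fin d → ℝ)
    (hpos : ∀ i, 0 < a i) (z : Fin d → ℝ) (t : ℝ) :
    (∀ ζ : Fin d → ℝ, (∑ i, ζ i / a i) < 1 → 0 ≤ t + ∑ i, z i * ζ i) ↔
    ∃ s ∈ Set.Icc (0:ℝ) t, ∀ i, z i = -s / a i := by
  constructor
  · intro H
    have ht0 : 0 ≤ t := by
      have := H (fun _ => 0) (by simp)
      simpa using this
    -- z is orthogonal to the hyperplane
    have horth : ∀ v : Fin d → ℝ, (∑ i, v i / a i) = 0 → (∑ i, z i * v i) = 0 := by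
      intro v hv
      by_contra h
      set A := ∑ i, z i * v i with hA
      have h1 : ∑ i, (fun i => (-(t+1)/A) * v i) i / a i = 0 := by
        have : ∑ i, (fun i => (-(t+1)/A) * v i) i / a i
            = (-(t+1)/A) * ∑ i, v i / a i := by
          rw [Finset.mul_sum]
          exact Finset.sum_congr rfl fun i _ => by
            show (-(t+1)/A) * v i / a i = _; ring
        rw [this, hv, mul_zero]
      have h2 := H (fun i => (-(t+1)/A) * v i) (by rw [h1]; norm_num)
      have h3 : ∑ i, z i * ((-(t+1)/A) * v i) = (-(t+1)/A) * A := by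
        rw [Finset.mul_sum]
        exact Finset.sum_congr rfl fun i _ => by ring
      rw [h3] at h2
      rw [div_mul_cancel₀ _ h] at h2
      linarith
    -- z = λ / a
    have hne : (Finset.univ : Finset (Fin d)).Nonempty := by
      have : Nonempty (Fin d) := ⟨⟨0, hd⟩⟩
      exact Finset.univ_nonempty
    set W : ℝ := ∑ i, ((a i)⁻¹)^2 with hW
    have hWpos : 0 < W := by
      apply Finset.sum_pos _ hne
      intro i _
      have := hpos i
      positivity
    set lam : ℝ := (∑ i, z i / a i) / W with hlam
    have hz : ∀ i, z i = lam / a i := by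
      set v : Fin d → ℝ := fun i => z i - lam / a i with hvdef
      have hv0 : ∑ i, v i / a i = 0 := by
        have : ∑ i, v i / a i = (∑ i, z i / a i) - lam * W := by
          rw [hW, Finset.mul_sum, ← Finset.sum_sub_distrib]
          exact Finset.sum_congr rfl fun i _ => by
            have := (hpos i).ne'
            simp only [hvdef]
            field_simp [hvdef]
        rw [this, hlam, div_mul_cancel₀ _ hWpos.ne']
        ring
      have hzv := horth v hv0
      have hsq : ∑ i, (v i)^2 = 0 := by
        have : ∑ i, (v i)^2 = (∑ i, z i * v i) - lam * (∑ i, v i / a i) := by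
          rw [Finset.mul_sum, ← Finset.sum_sub_distrib]
          exact Finset.sum_congr rfl fun i _ => by
            have := (hpos i).ne'
            simp only [hvdef]
            field_simp [hvdef]
        rw [this, hzv, hv0]; ring
      have hvz : ∀ i ∈ Finset.univ, v i = 0 := by
        intro i _
        have := (Finset.sum_eq_zero_iff_of_nonneg
          (fun i _ => sq_nonneg (v i))).mp hsq i (Finset.mem_univ i)
        exact pow_eq_zero_iff (by norm_num) |>.mp this
      intro i
      have h1 : z i - lam / a i = 0 := hvz i (Finset.mem_univ i)
      linarith
    clear_value lam W
    -- every σ < 1 is realized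
    have hline : ∀ σ : ℝ, σ < 1 → 0 ≤ t + lam * σ := by
      intro σ hσ
      set i0 : Fin d := ⟨0, hd⟩
      set ζ : Fin d → ℝ := fun i => if i = i0 then σ * a i0 else 0 with hζ
      have hs1 : ∑ i, ζ i / a i = σ := by
        rw [Finset.sum_eq_single i0]
        · simp [hζ, (hpos i0).ne']
        · intro b _ hb; simp [hζ, hb]
        · intro h; exact absurd (Finset.mem_univ i0) h
      have hs2 : ∑ i, z i * ζ i = lam * σ := by
        rw [Finset.sum_eq_single i0]
        · rw [hz i0]; simp only [hζ, if_pos rfl]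
          field_simp [(hpos i0).ne']
        · intro b _ hb; simp [hζ, hb]
        · intro h; exact absurd (Finset.mem_univ i0) h
      have := H ζ (by rw [hs1]; exact hσ)
      rwa [hs2] at this
    have hlam_le : lam ≤ 0 := by
      by_contra h
      push_neg at h
      have hσ : -(t+1)/lam < 1 := by
        rw [div_lt_one h]; linarith
      have := hline _ hσ
      rw [mul_div_cancel₀ _ h.ne'] at this
      linarith
    have htl : 0 ≤ t + lam := by
      by_contra h
      push_neg at h
      have hlamneg : lam < 0 := by linarith
      have hq : -t / lam < 1 := by
        rw [div_lt_iff_of_neg hlamneg]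
        linarith
      have hσ : (-t/lam + 1)/2 < 1 := by linarith
      have := hline _ hσ
      have heq : lam * ((-t/lam + 1)/2) = (-t + lam)/2 := by
        field_simp [hlamneg.ne]
      rw [heq] at this
      linarith
    refine ⟨-lam, ⟨by linarith, by linarith⟩, fun i => ?_⟩
    rw [hz i, neg_neg]
  · rintro ⟨s, ⟨hs0, hst⟩, hzs⟩ ζ hσ
    have hsum : ∑ i, z i * ζ i = -s * ∑ i, ζ i / a i := by
      rw [Finset.mul_sum]
      exact Finset.sum_congr rfl fun i _ => by rw [hzs i]; ring
    rw [hsum]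
    nlinarith [mul_nonneg hs0 (by linarith : (0:ℝ) ≤ 1 - ∑ i, ζ i / a i)]

/-- For the open half-space `Ω = { ζ : ∑ ζ_i/a_i < 1 }` extending the ellipsoid
domain: the polar cone `{ (z,t) : t + ⟨z,ζ⟩ ≥ 0 ∀ζ ∈ Ω }` is exactly
`{ (z,t) : ∃ s ∈ [0,t], z_i = −s/a_i ∀i }`, and consequently for every `T ≥ 0`
the maximum of `I(z) = ∑ ⌊−z_i⌋` over the slice `t = T` equals `∑ ⌊T/a_i⌋`. -/
theorem stmt_4 (d : ℕ) (hd : 1 ≤ d) (a : Fin d → ℝ)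
    (hpos : ∀ i, 0 < a i) (hmono : Monotone a) :
    {p : (Fin d → ℝ) × ℝ |
        ∀ ζ : Fin d → ℝ, (∑ i, ζ i / a i) < 1 → 0 ≤ p.2 + ∑ i, p.1 i * ζ i}
      = {p : (Fin d → ℝ) × ℝ | ∃ s ∈ Set.Icc (0:ℝ) p.2, ∀ i, p.1 i = -s / a i} ∧
    ∀ T : ℝ, 0 ≤ T →
      IsGreatest {m : ℤ | ∃ z : Fin d → ℝ,
          (∀ ζ : Fin d → ℝ, (∑ i, ζ i / a i) < 1 → 0 ≤ T + ∑ i, z i * ζ i) ∧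
          m = ∑ i, ⌊-(z i)⌋}
        (∑ i, ⌊T / a i⌋) := by
  constructor
  · ext p
    exact key_stmt4 d hd a hpos p.1 p.2
  · intro T hT
    constructor
    · refine ⟨fun i => -T / a i, ?_, ?_⟩
      · exact (key_stmt4 d hd a hpos _ T).mpr ⟨T, ⟨hT, le_refl T⟩, fun i => rfl⟩
      · exact Finset.sum_congr rfl fun i _ => by
          show _ = ⌊-(-T / a i)⌋; rw [neg_div, neg_neg]
    · rintro m ⟨z, hz, rfl⟩
      obtain ⟨s, ⟨hs0, hsT⟩, hzs⟩ := (key_stmt4 d hd a hpos z T).mp hz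
      apply Finset.sum_le_sum
      intro i _
      rw [hzs i, neg_div, neg_neg]
      exact Int.floor_le_floor ((div_le_div_iff_of_pos_right (hpos i)).mpr hsT)
end

section
/- Let d ≥ 1 and let C ⊆ γ = (−∞,0]^d be a compact, O star-shaped set. Then C_γ = (C + γ^a) ∩ γ is compact, O star-shaped, and γ-saturated, i.e. (C_γ)_γ = C_γ. -/
open scoped Pointwise

/-- `γ = (−∞,0]^d`. -/
def gamSet (d : ℕ) : Set (Fin d → ℝ) := {x | ∀ i, x i ≤ 0}

/-- `γ^a = [0,∞)^d`. -/
def gamA (d : ℕ) : Set (Fin d → ℝ) := {x | ∀ i, 0 ≤ x i}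

/-- The γ-saturation `C_γ = (C + γ^a) ∩ γ`. -/
def satur (d : ℕ) (C : Set (Fin d → ℝ)) : Set (Fin d → ℝ) :=
  (C + gamA d) ∩ gamSet d

lemma isClosed_gamSet (d : ℕ) : IsClosed (gamSet d) := by
  have : gamSet d = ⋂ i, {x : Fin d → ℝ | x i ≤ 0} := by ext x; simp [gamSet]
  rw [this]
  exact isClosed_iInter fun i => isClosed_le (continuous_apply i) continuous_const

lemma isClosed_gamA (d : ℕ) : IsClosed (gamA d) := by
  have : gamA d = ⋂ i, {x : Fin d → ℝ | 0 ≤ x i} := by ext x; simp [gamA]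
  rw [this]
  exact isClosed_iInter fun i => isClosed_le continuous_const (continuous_apply i)

/-- If `C ⊆ γ = (−∞,0]^d` is compact and `O` star-shaped, then
`C_γ = (C + γ^a) ∩ γ` is compact, `O` star-shaped, and γ-saturated. -/
theorem stmt_6 (d : ℕ) (hd : 1 ≤ d) (C : Set (Fin d → ℝ))
    (hsub : C ⊆ gamSet d) (hcomp : IsCompact C)
    (hstar : ∀ z ∈ C, ∀ s ∈ Set.Icc (0:ℝ) 1, s • z ∈ C) :
    IsCompact (satur d C) ∧
    (∀ z ∈ satur d C, ∀ s ∈ Set.Icc (0:ℝ) 1, s • z ∈ satur d C) ∧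
    satur d (satur d C) = satur d C := by
  refine ⟨?_, ?_, ?_⟩
  · -- compactness: closed and bounded
    have hclosed : IsClosed (satur d C) :=
      (((isClosed_gamA d).add_left_of_isCompact hcomp)).inter (isClosed_gamSet d)
    obtain ⟨M, hM⟩ := (Metric.isBounded_iff_subset_closedBall 0).1 hcomp.isBounded
    apply Metric.isCompact_of_isClosed_isBounded hclosed
    rw [Metric.isBounded_iff_subset_closedBall 0]
    refine ⟨M, fun x hx => ?_⟩
    obtain ⟨⟨c, hc, a, ha, rfl⟩, hneg⟩ := hx
    have hcM : ‖c‖ ≤ M := by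
      have := hM hc
      simpa [Metric.mem_closedBall, dist_zero_right] using this
    rw [Metric.mem_closedBall, dist_zero_right]
    rw [pi_norm_le_iff_of_nonneg (le_trans (norm_nonneg c) hcM)]
    intro i
    have h1 : c i ≤ c i + a i := le_add_of_nonneg_right (ha i)
    have h2 : c i + a i ≤ 0 := hneg i
    have h3 : |c i| ≤ ‖c‖ := norm_le_pi_norm c i
    rw [Real.norm_eq_abs, abs_le]
    constructor
    · have : -‖c‖ ≤ c i := neg_le_of_abs_le h3
      show -M ≤ c i + a i
      linarith
    · show c i + a i ≤ M
      have h0 : (0:ℝ) ≤ M := le_trans (norm_nonneg c) hcM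
      linarith
  · rintro z ⟨⟨c, hc, a, ha, rfl⟩, hneg⟩ s hs
    refine ⟨⟨s • c, hstar c hc s hs, s • a, fun i => mul_nonneg hs.1 (ha i), ?_⟩,
      fun i => mul_nonpos_of_nonneg_of_nonpos hs.1 (hneg i)⟩
    funext i; simp [mul_add]
  · apply Set.Subset.antisymm
    · rintro z ⟨⟨y, ⟨⟨c, hc, b, hb, rfl⟩, _⟩, a, ha, rfl⟩, hneg⟩
      exact ⟨⟨c, hc, b + a, fun i => add_nonneg (hb i) (ha i), by funext i; simp; ring⟩, hneg⟩
    · intro z hz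
      exact ⟨⟨z, hz, 0, fun i => le_refl 0, by simp⟩, hz.2⟩
end

section
/- Let d ≥ 1 and let C ⊆ γ = (−∞,0]^d be a γ-saturated set. Then J_C = {v ∈ ℤ^d_{≥0} : C ∩ C_v ≠ ∅}, and ∂J_C = {v ∈ J_C : C ∩ (cl(C_v) \ C_v) = ∅}, where cl denotes topological closure. -/
open scoped Pointwise

/-- `C_v = ∏_i (−v_i−1, −v_i]`. -/
def Cvset (d : ℕ) (v : Fin d → ℕ) : Set (Fin d → ℝ) :=
  {x | ∀ i, -(v i : ℝ) - 1 < x i ∧ x i ≤ -(v i : ℝ)}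

/-- `J_C = { v ∈ ℤ^d_{≥0} : −v ∈ C }`. -/
def Jset (d : ℕ) (C : Set (Fin d → ℝ)) : Set (Fin d → ℕ) :=
  {v | (fun i => -(v i : ℝ)) ∈ C}

/-- `∂J_C = { v ∈ J_C : v + e_i ∉ J_C for all i }`. -/
def bdJset (d : ℕ) (C : Set (Fin d → ℝ)) : Set (Fin d → ℕ) :=
  {v | v ∈ Jset d C ∧ ∀ i, Function.update v i (v i + 1) ∉ Jset d C}

lemma closure_Cvset (d : ℕ) (v : Fin d → ℕ) :
    closure (Cvset d v) = {x | ∀ i, -(v i : ℝ) - 1 ≤ x i ∧ x i ≤ -(v i : ℝ)} := by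
  have h : Cvset d v = Set.pi Set.univ (fun i => Set.Ioc (-(v i:ℝ)-1) (-(v i:ℝ))) := by
    ext x; simp [Cvset, Set.mem_pi]
  rw [h, closure_pi_set]
  ext x
  have : ∀ i, closure (Set.Ioc (-(v i:ℝ)-1) (-(v i:ℝ))) = Set.Icc (-(v i:ℝ)-1) (-(v i:ℝ)) :=
    fun i => closure_Ioc (by norm_num)
  simp only [Set.mem_pi, Set.mem_univ, forall_true_left, Function.comp, this,
    Set.mem_Icc, Set.mem_setOf_eq]

lemma sat_mono {d : ℕ} {C : Set (Fin d → ℝ)}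
    (hsat : (C + gamA d) ∩ gamSet d = C) {x z : Fin d → ℝ}
    (hx : x ∈ C) (hz : ∀ i, z i ≤ 0) (hxz : ∀ i, x i ≤ z i) : z ∈ C := by
  rw [← hsat]
  refine ⟨⟨x, hx, z - x, fun i => by simpa using hxz i, by ring⟩, hz⟩

/-- For a γ-saturated `C ⊆ γ`: `J_C = { v : C ∩ C_v ≠ ∅ }` and
`∂J_C = { v ∈ J_C : C ∩ (cl(C_v) \ C_v) = ∅ }`. -/
theorem stmt_7 (d : ℕ) (hd : 1 ≤ d) (C : Set (Fin d → ℝ))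
    (hsub : C ⊆ gamSet d)
    (hsat : (C + gamA d) ∩ gamSet d = C) :
    Jset d C = {v | (C ∩ Cvset d v).Nonempty} ∧
    bdJset d C = {v | v ∈ Jset d C ∧ C ∩ (closure (Cvset d v) \ Cvset d v) = ∅} := by
  constructor
  · ext v
    constructor
    · intro hv
      exact ⟨fun i => -(v i : ℝ), hv, fun i => ⟨by norm_num, le_refl _⟩⟩
    · rintro ⟨x, hxC, hxCv⟩
      exact sat_mono hsat hxC (fun i => by simp) (fun i => (hxCv i).2)
  · ext v
    simp only [bdJset, Set.mem_setOf_eq, and_congr_right_iff]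
    intro hv
    constructor
    · intro h
      rw [Set.eq_empty_iff_forall_notMem]
      rintro x ⟨hxC, hxcl, hxCv⟩
      rw [closure_Cvset] at hxcl
      -- some coordinate i with x i ≤ -(v i) - 1
      have : ∃ i, x i ≤ -(v i : ℝ) - 1 := by
        by_contra hc
        push_neg at hc
        exact hxCv fun i => ⟨hc i, (hxcl i).2⟩
      obtain ⟨i, hi⟩ := this
      apply h i
      show (fun j => -((Function.update v i (v i + 1) j : ℕ) : ℝ)) ∈ C
      refine sat_mono hsat hxC (fun j => by simp) (fun j => ?_)
      rcases eq_or_ne j i with rfl | hji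
      · simp only [Function.update_self]
        push_cast
        linarith
      · simp only [Function.update_of_ne hji]
        exact (hxcl j).2
    · intro h i hiJ
      have hmem : (fun j => -((Function.update v i (v i + 1) j : ℕ) : ℝ)) ∈
          C ∩ (closure (Cvset d v) \ Cvset d v) := by
        refine ⟨hiJ, ?_, ?_⟩
        · rw [closure_Cvset]
          intro j
          rcases eq_or_ne j i with rfl | hji
          · simp only [Function.update_self]
            push_cast
            constructor <;> linarith
          · simp only [Function.update_of_ne hji]
            constructor <;> norm_num
        · intro hc
          have h1 := (hc i).1
          simp only [Function.update_self] at h1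
          push_cast at h1
          linarith
      exact Set.eq_empty_iff_forall_notMem.mp h _ hmem
end

section
/- Let n ≥ 1 be an odd integer and let z ∈ (−n/4, 0]. Then the number of k ∈ {0, 1, …, n−1} with cos(2πk/n) ≥ cos(2πz/n) equals 1 + 2⌊−z⌋. (Equivalently, the circulant matrix A_z, with diagonal entries −cos(2πz/n) and entries 1/2 on the two cyclically adjacent off-diagonals, has exactly 1 + 2⌊−z⌋ nonnegative eigenvalues, so W(z) = {Q_z ≥ 0} is a quadratic cone of index 1 + 2⌊−z⌋.) -/
/-- For odd `n ≥ 1` and `z ∈ (−n/4, 0]`, the number of `k ∈ {0,…,n−1}` with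
`cos(2πk/n) ≥ cos(2πz/n)` equals `1 + 2⌊−z⌋`: the circulant matrix `A_z` has
exactly `1 + 2⌊−z⌋` nonnegative eigenvalues. -/
theorem stmt_10 (n : ℕ) (hn : 1 ≤ n) (hodd : Odd n) (z : ℝ)
    (hz1 : -(n : ℝ) / 4 < z) (hz2 : z ≤ 0) :
    (({k : ℕ | k < n ∧
        Real.cos (2 * Real.pi * z / n) ≤ Real.cos (2 * Real.pi * k / n)}.ncard : ℤ))
      = 1 + 2 * ⌊-z⌋ := by
  have hn0 : (0:ℝ) < n := by exact_mod_cast hn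
  have hπ := Real.pi_pos
  set w : ℝ := -z with hwdef
  have hw0 : 0 ≤ w := by simp [hwdef]; linarith
  have hw4 : 4 * w < n := by
    have : -(n:ℝ)/4 < z := hz1
    simp only [hwdef]; linarith
  set m : ℕ := ⌊w⌋₊ with hmdef
  have hmw : (m : ℝ) ≤ w := Nat.floor_le hw0
  have h2m : 2 * m < n := by
    have h4 : (4 * m : ℝ) < n := by linarith
    have h4' : 4 * m < n := by exact_mod_cast h4
    omega
  have hfloor : ⌊w⌋ = (m : ℤ) := (Int.natCast_floor_eq_floor hw0).symm
  have hcz : Real.cos (2 * Real.pi * z / n) = Real.cos (2 * Real.pi * w / n) := by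
    have : 2 * Real.pi * w / n = -(2 * Real.pi * z / n) := by
      simp only [hwdef]; ring
    rw [this, Real.cos_neg]
  have hθw : 2 * Real.pi * w / n < Real.pi / 2 := by
    rw [div_lt_div_iff₀ hn0 (by norm_num : (0:ℝ) < 2)]
    nlinarith
  have hθw0 : 0 ≤ 2 * Real.pi * w / n := by positivity
  -- key monotonicity lemma for 2k < n
  have key1 : ∀ k : ℕ, 2 * k < n →
      (Real.cos (2 * Real.pi * w / n) ≤ Real.cos (2 * Real.pi * k / n) ↔ (k:ℝ) ≤ w) := by
    intro k hk
    have hkr : (2 * k : ℝ) < n := by exact_mod_cast hk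
    have h1 : 2 * Real.pi * (k:ℝ) / n ∈ Set.Icc 0 Real.pi := by
      constructor
      · positivity
      · rw [div_le_iff₀ hn0]; nlinarith
    have h2 : 2 * Real.pi * w / n ∈ Set.Icc 0 Real.pi := ⟨hθw0, by linarith⟩
    rw [Real.strictAntiOn_cos.le_iff_ge h2 h1]
    constructor
    · intro h
      have h2π : (0:ℝ) < 2 * Real.pi := by linarith
      have := (div_le_div_iff_of_pos_right hn0).mp h
      nlinarith
    · intro h
      gcongr
  have key : ∀ k : ℕ, k < n →
      (Real.cos (2 * Real.pi * w / n) ≤ Real.cos (2 * Real.pi * k / n) ↔ (k ≤ m ∨ n - m ≤ k)) := by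
    intro k hk
    have hne : 2 * k ≠ n := by
      intro h
      exact (Nat.not_even_iff_odd.mpr hodd) ⟨k, by omega⟩
    rcases lt_or_gt_of_ne hne with hlt | hgt
    · rw [key1 k hlt, ← Nat.le_floor_iff hw0, ← hmdef]
      constructor
      · exact Or.inl
      · rintro (h | h)
        · exact h
        · omega
    · have hj : 2 * (n - k) < n := by omega
      have hcos : Real.cos (2 * Real.pi * k / n) = Real.cos (2 * Real.pi * ((n - k : ℕ):ℝ) / n) := by
        have hcast : ((n - k : ℕ):ℝ) = (n:ℝ) - k := by
          push_cast [le_of_lt hk]; ring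
        rw [hcast, show 2 * Real.pi * ((n:ℝ) - k) / n = 2 * Real.pi - 2 * Real.pi * k / n by
          field_simp]
        rw [Real.cos_two_pi_sub]
      rw [hcos, key1 _ hj, ← Nat.le_floor_iff hw0, ← hmdef]
      constructor
      · intro h; right; omega
      · rintro (h | h) <;> omega
  -- set equality
  have hset : {k : ℕ | k < n ∧
      Real.cos (2 * Real.pi * z / n) ≤ Real.cos (2 * Real.pi * k / n)}
      = ↑(Finset.range (m+1) ∪ Finset.Ico (n-m) n) := by
    ext k
    simp only [Set.mem_setOf_eq, Finset.coe_union, Set.mem_union, Finset.coe_range,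
      Set.mem_Iio, Finset.coe_Ico, Set.mem_Ico, hcz]
    constructor
    · rintro ⟨hk, hc⟩
      rcases (key k hk).mp hc with h | h
      · left; omega
      · right; omega
    · intro h
      have hk : k < n := by rcases h with h | h <;> omega
      refine ⟨hk, (key k hk).mpr ?_⟩
      rcases h with h | h
      · left; omega
      · right; omega
  rw [hset, Set.ncard_coe_finset,
    Finset.card_union_of_disjoint (by
      rw [Finset.disjoint_left]
      intro a ha hb
      simp only [Finset.mem_range] at ha
      simp only [Finset.mem_Ico] at hb
      omega),
    Finset.card_range, Nat.card_Ico]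
  rw [hfloor]
  have : n - (n - m) = m := by omega
  rw [this]
  push_cast
  ring
end

section
/- Let M and ℓ be odd positive integers and let z ∈ (−Mℓ/4, 0]. Then the number of k ∈ {0, 1, …, Mℓ−1} such that ℓ divides k and cos(2πk/(Mℓ)) ≥ cos(2πz/(Mℓ)) equals 1 + 2⌊−z/ℓ⌋. (This is the index of the quadratic cone of fixed points W(z)^G under the ℤ/ℓℤ-action on ℝ^{Mℓ} generated by the cyclic shift by M.) -/
open Real

private lemma aux_cos_iff (M ℓ : ℕ) (hM : Odd M) (hℓ0 : 0 < ℓ)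
    (w : ℝ) (hw0 : 0 ≤ w) (hwlt : w < (M : ℝ) * ℓ / 4)
    (t : ℕ) (ht : (t : ℤ) = ⌊w / (ℓ : ℝ)⌋) (j : ℕ) (hj : j < M) :
    Real.cos (2 * π * w / ((M : ℝ) * ℓ)) ≤ Real.cos (2 * π * j / (M : ℝ))
      ↔ (j ≤ t ∨ M - t ≤ j) := by
  have hM0 : 0 < M := hM.pos
  have hM0' : (0 : ℝ) < M := by exact_mod_cast hM0
  have hℓ0' : (0 : ℝ) < ℓ := by exact_mod_cast hℓ0
  have hpi := Real.pi_pos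
  -- t bound: 4t < M
  have htle : (t : ℝ) ≤ w / ℓ := by
    have := Int.floor_le (w / (ℓ : ℝ))
    rw [← ht] at this; exact_mod_cast this
  have hwdiv : w / ℓ < (M : ℝ) / 4 := by
    rw [div_lt_div_iff₀ hℓ0' (by norm_num)]
    nlinarith
  have h4t : 4 * t < M := by
    have : (t : ℝ) < (M : ℝ) / 4 := lt_of_le_of_lt htle hwdiv
    have : (4 * t : ℝ) < M := by linarith
    exact_mod_cast this
  -- floor characterization
  have hft : ∀ m : ℕ, m ≤ t ↔ (m : ℝ) ≤ w / ℓ := by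
    intro m
    rw [show (m ≤ t ↔ (m : ℤ) ≤ (t : ℤ)) from by exact_mod_cast Iff.rfl, ht, Int.le_floor]
    norm_num
  -- α in [0, π/2)
  have hα0 : 0 ≤ 2 * π * w / ((M : ℝ) * ℓ) := by positivity
  have hαlt : 2 * π * w / ((M : ℝ) * ℓ) < π / 2 := by
    rw [div_lt_iff₀ (by positivity)]
    nlinarith
  have hαmem : 2 * π * w / ((M : ℝ) * ℓ) ∈ Set.Icc (0 : ℝ) π := ⟨hα0, by linarith⟩
  -- key comparison for m with 2m ≤ M (angle in [0,π])
  have hkey : ∀ m : ℕ, 2 * m < M →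
      (Real.cos (2 * π * w / ((M : ℝ) * ℓ)) ≤ Real.cos (2 * π * m / (M : ℝ)) ↔ m ≤ t) := by
    intro m hm
    have hm' : (2 * m : ℝ) < M := by exact_mod_cast hm
    have hxmem : 2 * π * m / (M : ℝ) ∈ Set.Icc (0 : ℝ) π := by
      constructor
      · positivity
      · rw [div_le_iff₀ hM0']; nlinarith
    rw [Real.strictAntiOn_cos.le_iff_ge hαmem hxmem, hft m]
    rw [div_le_div_iff₀ hM0' (by positivity), le_div_iff₀ hℓ0']
    constructor <;> intro h
    · nlinarith [mul_pos hpi hM0', mul_pos (mul_pos hpi hM0') hℓ0']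
    · nlinarith [mul_pos hpi hM0', mul_pos (mul_pos hpi hM0') hℓ0']
  rcases lt_or_ge (2 * j) M with hcase | hcase
  · -- left case
    rw [hkey j hcase]
    constructor
    · exact Or.inl
    · rintro (h | h)
      · exact h
      · omega
  · -- 2j > M since M odd
    have hne : 2 * j ≠ M := by
      intro h; exact (Nat.not_odd_iff_even.mpr ⟨j, by omega⟩) hM
    have hgt : M < 2 * j := lt_of_le_of_ne hcase (Ne.symm hne)
    set m := M - j with hm
    have hm2 : 2 * m < M := by omega
    have hcos : Real.cos (2 * π * j / (M : ℝ)) = Real.cos (2 * π * m / (M : ℝ)) := by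
      have hjm : (j : ℝ) = M - m := by
        have : (m : ℕ) + j = M := by omega
        have := congrArg (Nat.cast : ℕ → ℝ) this
        push_cast at this; linarith
      rw [hjm, show 2 * π * ((M : ℝ) - m) / M = 2 * π - 2 * π * m / M by
        field_simp, Real.cos_two_pi_sub]
    rw [hcos, hkey m hm2]
    constructor
    · intro h; right; omega
    · rintro (h | h)
      · omega
      · omega

/-- For odd positive `M, ℓ` and `z ∈ (−Mℓ/4, 0]`, the number of `k ∈ {0,…,Mℓ−1}`
with `ℓ ∣ k` and `cos(2πk/(Mℓ)) ≥ cos(2πz/(Mℓ))` equals `1 + 2⌊−z/ℓ⌋`: this is the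
index of the quadratic cone of fixed points `W(z)^G` for the `ℤ/ℓℤ`-action on
`ℝ^{Mℓ}` generated by the cyclic shift by `M`. -/
theorem stmt_11 (M ℓ : ℕ) (hM : Odd M) (hℓ : Odd ℓ) (z : ℝ)
    (hz1 : -((M : ℝ) * ℓ) / 4 < z) (hz2 : z ≤ 0) :
    (({k : ℕ | k < M * ℓ ∧ ℓ ∣ k ∧
        Real.cos (2 * Real.pi * z / ((M : ℝ) * ℓ))
          ≤ Real.cos (2 * Real.pi * k / ((M : ℝ) * ℓ))}.ncard : ℤ))
      = 1 + 2 * ⌊-z / (ℓ : ℝ)⌋ := by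
  have hM0 : 0 < M := hM.pos
  have hℓ0 : 0 < ℓ := hℓ.pos
  have hℓ0' : (0 : ℝ) < ℓ := by exact_mod_cast hℓ0
  set w : ℝ := -z with hw
  have hw0 : 0 ≤ w := by simp [hw]; linarith
  have hwlt : w < (M : ℝ) * ℓ / 4 := by simp only [hw]; linarith
  obtain ⟨t, ht⟩ : ∃ t : ℕ, (t : ℤ) = ⌊w / (ℓ : ℝ)⌋ :=
    ⟨(⌊w / (ℓ : ℝ)⌋).toNat, Int.toNat_of_nonneg (Int.floor_nonneg.mpr (div_nonneg hw0 hℓ0'.le))⟩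
  have hcosz : Real.cos (2 * Real.pi * z / ((M : ℝ) * ℓ))
      = Real.cos (2 * Real.pi * w / ((M : ℝ) * ℓ)) := by
    rw [show 2 * Real.pi * z / ((M : ℝ) * ℓ) = -(2 * Real.pi * w / ((M : ℝ) * ℓ)) by
      simp [hw]; ring, Real.cos_neg]
  have h4t : 4 * t < M := by
    have htle : (t : ℝ) ≤ w / ℓ := by
      have := Int.floor_le (w / (ℓ : ℝ))
      rw [← ht] at this; exact_mod_cast this
    have hM0' : (0 : ℝ) < M := by exact_mod_cast hM0
    have hwdiv : w / ℓ < (M : ℝ) / 4 := by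
      rw [div_lt_div_iff₀ hℓ0' (by norm_num)]; nlinarith
    have : (4 * t : ℝ) < M := by linarith
    exact_mod_cast this
  -- set equality
  have hset : {k : ℕ | k < M * ℓ ∧ ℓ ∣ k ∧
        Real.cos (2 * Real.pi * z / ((M : ℝ) * ℓ))
          ≤ Real.cos (2 * Real.pi * k / ((M : ℝ) * ℓ))}
      = ↑((Finset.range (t + 1) ∪ Finset.Ico (M - t) M).image (fun j => ℓ * j)) := by
    ext k
    simp only [Finset.coe_image, Set.mem_image, Finset.mem_coe, Finset.mem_union,
      Finset.mem_range, Finset.mem_Ico, Set.mem_setOf_eq]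
    constructor
    · rintro ⟨hk1, ⟨j, rfl⟩, hk3⟩
      have hj : j < M := by
        by_contra h
        push_neg at h
        exact absurd hk1 (by push_neg; calc M * ℓ ≤ j * ℓ := Nat.mul_le_mul_right ℓ h
                                           _ = ℓ * j := Nat.mul_comm _ _)
      rw [hcosz] at hk3
      have hangle : 2 * Real.pi * (↑(ℓ * j) : ℝ) / ((M : ℝ) * ℓ) = 2 * Real.pi * j / (M : ℝ) := by
        push_cast; field_simp
      rw [hangle] at hk3
      have := (aux_cos_iff M ℓ hM hℓ0 w hw0 hwlt t ht j hj).mp hk3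
      refine ⟨j, ?_, rfl⟩
      rcases this with h | h
      · left; omega
      · right; exact ⟨h, hj⟩
    · rintro ⟨j, hj, rfl⟩
      have hjM : j < M := by rcases hj with h | h; omega; exact h.2
      have hcond : j ≤ t ∨ M - t ≤ j := by rcases hj with h | h; left; omega; right; exact h.1
      refine ⟨?_, ⟨j, rfl⟩, ?_⟩
      · calc ℓ * j < ℓ * M := (Nat.mul_lt_mul_left hℓ0).mpr hjM
             _ = M * ℓ := Nat.mul_comm _ _
      · rw [hcosz]
        have hangle : 2 * Real.pi * (↑(ℓ * j) : ℝ) / ((M : ℝ) * ℓ) = 2 * Real.pi * j / (M : ℝ) := by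
          push_cast; field_simp
        rw [hangle]
        exact (aux_cos_iff M ℓ hM hℓ0 w hw0 hwlt t ht j hjM).mpr hcond
  rw [hset, Set.ncard_coe_finset]
  have hinj : Function.Injective (fun j => ℓ * j) := fun a b h => by
    simpa using Nat.eq_of_mul_eq_mul_left hℓ0 h
  rw [Finset.card_image_of_injective _ hinj, Finset.card_union_of_disjoint]
  · rw [Finset.card_range, Nat.card_Ico]
    have : M - (M - t) = t := by omega
    rw [this]
    have hwdiv : -z / (ℓ : ℝ) = w / ℓ := by rw [hw]
    rw [hwdiv, ← ht]
    push_cast; ring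
  · rw [Finset.disjoint_left]
    intro a ha hb
    simp only [Finset.mem_range] at ha
    simp only [Finset.mem_Ico] at hb
    omega
end

section
/- Let n = 2m+1 be an odd positive integer, d ≥ 1, v ∈ ℤ^d_{≥0} with v_i ≤ m for all i, and let C ⊆ ∏_{i=1}^d (max(−n/4, −(v_i+1)), 0] be a compact set. Then there exists κ ≥ 0 such that for every z ∈ C, every i ∈ {1,…,d}, and every u_i = (u_{0,i}, u_{1,i}, …, u_{m,i}) ∈ E with Q_{z_i}(u_i) ≥ 0, one has ∑_{k=v_i+1}^m |u_{k,i}|² ≤ κ·( u_{0,i}² + ∑_{k=1}^{v_i} |u_{k,i}|² ). (This bound gives the properness of the retraction homotopy H_v restricted to 𝒱.) -/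
open scoped BigOperators

/-- The eigenvalues `λ_k(z) = cos(2πk/n) − cos(2πz/n)`. -/
noncomputable def lamE (n : ℕ) (k : ℕ) (z : ℝ) : ℝ :=
  Real.cos (2 * Real.pi * k / n) - Real.cos (2 * Real.pi * z / n)

/-- The diagonalized quadratic form on `E = ℝ × ℂ^m` (with `n = 2m+1`):
`Q_z(u) = λ_0(z)·u_0² + ∑_{k=1}^m λ_k(z)·|u_k|²`. -/
noncomputable def Qform (m : ℕ) (z : ℝ) (u : ℝ × (Fin m → ℂ)) : ℝ :=
  lamE (2 * m + 1) 0 z * u.1 ^ 2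
    + ∑ k : Fin m, lamE (2 * m + 1) (k.1 + 1) z * Complex.normSq (u.2 k)

lemma lam_le_two (n k : ℕ) (z : ℝ) : lamE n k z ≤ 2 := by
  unfold lamE
  nlinarith [Real.cos_le_one (2*Real.pi*k/n), Real.neg_one_le_cos (2*Real.pi*z/n)]

lemma lam_neg (m j : ℕ) (hjm : j ≤ m) (z : ℝ)
    (hz2 : -(j:ℝ) < z) (hz0 : z ≤ 0) : lamE (2*m+1) j z < 0 := by
  have hn : (0:ℝ) < ((2*m+1:ℕ):ℝ) := by positivity
  have hpi := Real.pi_pos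
  have hzc : Real.cos (2*Real.pi*z/((2*m+1:ℕ):ℝ)) = Real.cos (2*Real.pi*(-z)/((2*m+1:ℕ):ℝ)) := by
    rw [← Real.cos_neg]; ring_nf
  unfold lamE
  rw [hzc]
  have hb : 2*Real.pi*(j:ℝ)/((2*m+1:ℕ):ℝ) ≤ Real.pi := by
    rw [div_le_iff₀ hn]
    have : (j:ℝ) ≤ m := by exact_mod_cast hjm
    push_cast
    nlinarith
  have ha : 0 ≤ 2*Real.pi*(-z)/((2*m+1:ℕ):ℝ) := by
    apply div_nonneg _ hn.le
    nlinarith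
  have hab : 2*Real.pi*(-z)/((2*m+1:ℕ):ℝ) < 2*Real.pi*(j:ℝ)/((2*m+1:ℕ):ℝ) := by
    apply div_lt_div_of_pos_right _ hn
    nlinarith
  have := Real.cos_lt_cos_of_nonneg_of_le_pi ha hb hab
  linarith

/-- Properness bound for the retraction homotopy `H_v` on `𝒱`: for a compact
`C ⊆ ∏_i (max(−n/4, −(v_i+1)), 0]` there is `κ ≥ 0` such that, whenever
`Q_{z_i}(u) ≥ 0` with `z ∈ C`, one has
`∑_{k=v_i+1}^m |u_k|² ≤ κ·(u_0² + ∑_{k=1}^{v_i} |u_k|²)`. -/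
theorem stmt_17 (m d : ℕ) (hd : 1 ≤ d)
    (v : Fin d → ℕ) (hv : ∀ i, v i ≤ m)
    (C : Set (Fin d → ℝ)) (hcomp : IsCompact C)
    (hC : ∀ z ∈ C, ∀ i,
      max (-((2 * m + 1 : ℕ) : ℝ) / 4) (-((v i : ℝ) + 1)) < z i ∧ z i ≤ 0) :
    ∃ κ : ℝ, 0 ≤ κ ∧ ∀ z ∈ C, ∀ i : Fin d, ∀ u : ℝ × (Fin m → ℂ),
      0 ≤ Qform m (z i) u →
      (∑ k : Fin m, if v i ≤ k.1 then Complex.normSq (u.2 k) else 0) ≤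
        κ * (u.1 ^ 2 + ∑ k : Fin m, if k.1 + 1 ≤ v i then Complex.normSq (u.2 k) else 0) := by
  -- trivial cases
  rcases Nat.eq_zero_or_pos m with hm | hm
  · subst hm
    exact ⟨0, le_refl 0, fun z _ i u _ => by simp⟩
  rcases C.eq_empty_or_nonempty with hCe | hne
  · exact ⟨0, le_refl 0, fun z hz => by simp [hCe] at hz⟩
  -- the functions to be bounded below
  set g : Fin d × Fin m → (Fin d → ℝ) → ℝ := fun p z =>
    if v p.1 ≤ p.2.1 then -lamE (2*m+1) (p.2.1+1) (z p.1) else 1 with hg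
  have hcont : ∀ p, Continuous (g p) := by
    intro p
    by_cases h : v p.1 ≤ p.2.1 <;> simp only [hg, h, if_true, if_false]
    · unfold lamE
      fun_prop
    · exact continuous_const
  have hgpos : ∀ p, ∀ z ∈ C, 0 < g p z := by
    intro p z hz
    by_cases h : v p.1 ≤ p.2.1 <;> simp only [hg, h, if_true, if_false]
    · have hzi := hC z hz p.1
      have h1 : -((v p.1 : ℝ)+1) < z p.1 := lt_of_le_of_lt (le_max_right _ _) hzi.1
      have h2 : -((p.2.1+1 : ℕ):ℝ) < z p.1 := by
        have : ((v p.1 : ℝ)+1) ≤ ((p.2.1+1:ℕ):ℝ) := by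
          push_cast; exact_mod_cast by push_cast; linarith [(Nat.cast_le (α := ℝ)).2 h]
        linarith
      have := lam_neg m (p.2.1+1) (by omega) (z p.1) h2 hzi.2
      linarith
    · norm_num
  have H : ∀ p : Fin d × Fin m, ∃ cp : ℝ, 0 < cp ∧ ∀ z ∈ C, cp ≤ g p z := by
    intro p
    obtain ⟨z₀, hz₀C, hz₀⟩ := hcomp.exists_isMinOn hne (hcont p).continuousOn
    exact ⟨g p z₀, hgpos p z₀ hz₀C, fun w hw => hz₀ hw⟩
  choose c0 hc0pos hc0le using H
  haveI : NeZero d := ⟨by omega⟩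
  haveI : NeZero m := ⟨by omega⟩
  have hun : (Finset.univ : Finset (Fin d × Fin m)).Nonempty := Finset.univ_nonempty
  set c : ℝ := Finset.univ.inf' hun c0 with hc
  have hcpos : 0 < c := by
    rw [hc, Finset.lt_inf'_iff]
    exact fun p _ => hc0pos p
  have hcle : ∀ p, ∀ z ∈ C, c ≤ g p z := fun p z hz =>
    le_trans (Finset.inf'_le c0 (Finset.mem_univ p)) (hc0le p z hz)
  refine ⟨2 / c, by positivity, ?_⟩
  intro z hz i u hQ
  set S := ∑ k : Fin m, if v i ≤ k.1 then Complex.normSq (u.2 k) else 0 with hS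
  set T := u.1 ^ 2 + ∑ k : Fin m, if k.1 + 1 ≤ v i then Complex.normSq (u.2 k) else 0 with hT
  have key : c * S ≤ 2 * T := by
    have step1 : c * S ≤ ∑ k : Fin m,
        (if v i ≤ k.1 then (-lamE (2*m+1) (k.1+1) (z i)) * Complex.normSq (u.2 k) else 0) := by
      rw [hS, Finset.mul_sum]
      apply Finset.sum_le_sum
      intro k _
      by_cases h : v i ≤ k.1 <;> simp only [h, if_true, if_false, mul_zero, le_refl]
      have hgk := hcle (i, k) z hz
      simp only [hg, h, if_true] at hgk
      exact mul_le_mul_of_nonneg_right hgk (Complex.normSq_nonneg _)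
    have split : ∑ k : Fin m, lamE (2*m+1) (k.1+1) (z i) * Complex.normSq (u.2 k)
        = (∑ k : Fin m, if v i ≤ k.1 then lamE (2*m+1) (k.1+1) (z i) * Complex.normSq (u.2 k) else 0)
        + ∑ k : Fin m, if k.1 + 1 ≤ v i then lamE (2*m+1) (k.1+1) (z i) * Complex.normSq (u.2 k) else 0 := by
      rw [← Finset.sum_add_distrib]
      apply Finset.sum_congr rfl
      intro k _
      by_cases h : v i ≤ k.1
      · have h' : ¬ (k.1 + 1 ≤ v i) := by omega
        simp [h, h']
      · have h' : k.1 + 1 ≤ v i := by omega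
        simp [h, h']
    have hQ' : 0 ≤ lamE (2*m+1) 0 (z i) * u.1 ^ 2
        + ∑ k : Fin m, lamE (2*m+1) (k.1+1) (z i) * Complex.normSq (u.2 k) := hQ
    have step2 : ∑ k : Fin m,
        (if v i ≤ k.1 then (-lamE (2*m+1) (k.1+1) (z i)) * Complex.normSq (u.2 k) else 0)
        = -(∑ k : Fin m, if v i ≤ k.1 then lamE (2*m+1) (k.1+1) (z i) * Complex.normSq (u.2 k) else 0) := by
      rw [← Finset.sum_neg_distrib]
      apply Finset.sum_congr rfl
      intro k _
      by_cases h : v i ≤ k.1 <;> simp [h]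
    have step3 : lamE (2*m+1) 0 (z i) * u.1 ^ 2 ≤ 2 * u.1 ^ 2 :=
      mul_le_mul_of_nonneg_right (lam_le_two _ _ _) (sq_nonneg _)
    have step4 : (∑ k : Fin m, if k.1 + 1 ≤ v i then lamE (2*m+1) (k.1+1) (z i) * Complex.normSq (u.2 k) else 0)
        ≤ ∑ k : Fin m, if k.1 + 1 ≤ v i then 2 * Complex.normSq (u.2 k) else 0 := by
      apply Finset.sum_le_sum
      intro k _
      by_cases h : k.1 + 1 ≤ v i <;> simp only [h, if_true, if_false, le_refl]
      exact mul_le_mul_of_nonneg_right (lam_le_two _ _ _) (Complex.normSq_nonneg _)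
    have step5 : ∑ k : Fin m, (if k.1 + 1 ≤ v i then 2 * Complex.normSq (u.2 k) else 0)
        = 2 * ∑ k : Fin m, if k.1 + 1 ≤ v i then Complex.normSq (u.2 k) else 0 := by
      rw [Finset.mul_sum]
      apply Finset.sum_congr rfl
      intro k _
      by_cases h : k.1 + 1 ≤ v i <;> simp [h]
    rw [hT]
    rw [split] at hQ'
    rw [step2] at step1
    linarith
  have hT0 : 0 ≤ T := by
    rw [hT]
    have : 0 ≤ ∑ k : Fin m, if k.1 + 1 ≤ v i then Complex.normSq (u.2 k) else 0 :=
      Finset.sum_nonneg fun k _ => by by_cases h : k.1 + 1 ≤ v i <;> simp [h, Complex.normSq_nonneg]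
    nlinarith [sq_nonneg u.1]
  rw [div_mul_eq_mul_div, le_div_iff₀ hcpos]
  nlinarith
end

section
/- Let d ≥ 1 and let Ω ⊆ ℝ^d_{≥0} be a nonempty bounded open set containing a point with all coordinates strictly positive, and let k ≥ 1 be an integer. Then the set S = {T ≥ 0 : ∃ z ∈ Ω_T°, I(z) ≥ k} is nonempty and equal to the interval [min S, ∞); in particular its infimum is strictly positive and is attained (the infimum defining c_k(X_Ω) is a minimum, and the spectrum is upward closed). -/
open scoped BigOperators

/-- The spectrum set `S = { T ≥ 0 : ∃ z ∈ Ω_T°, I(z) ≥ k }`, where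
`Ω_T° = { z : z_i ≤ 0 ∀i, T + ⟨z,ζ⟩ ≥ 0 ∀ζ ∈ Ω }` and `I(z) = ∑ ⌊−z_i⌋`. -/
noncomputable def specSet (d : ℕ) (Ω : Set (Fin d → ℝ)) (k : ℕ) : Set ℝ :=
  {T | 0 ≤ T ∧ ∃ z : Fin d → ℝ, (∀ i, z i ≤ 0) ∧
      (∀ ζ ∈ Ω, 0 ≤ T + ∑ i, z i * ζ i) ∧ (k : ℤ) ≤ ∑ i, ⌊-(z i)⌋}

lemma shrink_aux : ∀ (s d k : ℕ) (m : Fin d → ℕ), ∑ i, m i = s → k ≤ s →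
    ∃ n : Fin d → ℕ, (∀ i, n i ≤ m i) ∧ ∑ i, n i = k := by
  intro s
  induction s with
  | zero => exact fun d k m hm hk => ⟨m, fun i => le_rfl, by omega⟩
  | succ s ih =>
    intro d k m hm hk
    rcases eq_or_lt_of_le hk with rfl | hk'
    · exact ⟨m, fun i => le_rfl, hm⟩
    · have hex : ∃ i, 0 < m i := by
        by_contra h
        push_neg at h
        have : ∑ i, m i = 0 := Finset.sum_eq_zero (fun i _ => by have := h i; omega)
        omega
      obtain ⟨i, hi⟩ := hex
      have hsum : ∑ j, Function.update m i (m i - 1) j = s := by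
        rw [Finset.sum_update_of_mem (Finset.mem_univ i)]
        have := Finset.add_sum_erase Finset.univ m (Finset.mem_univ i)
        simp only [Finset.sdiff_singleton_eq_erase] at *
        omega
      obtain ⟨n, hn, hns⟩ := ih d k _ hsum (by omega)
      refine ⟨n, fun j => ?_, hns⟩
      have := hn j
      by_cases hj : j = i
      · subst hj; rw [Function.update_self] at this; omega
      · rwa [Function.update_of_ne hj] at this


/-- For a nonempty bounded open `Ω ⊆ ℝ^d_{≥0}` containing a point with all
coordinates positive, and `k ≥ 1`: the spectrum set `S` is nonempty and equals
the interval `[min S, ∞)`; in particular its infimum is strictly positive and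
attained. -/
theorem stmt_18 (d : ℕ) (hd : 1 ≤ d) (Ω : Set (Fin d → ℝ))
    (hopen : IsOpen Ω) (hne : Ω.Nonempty)
    (hbdd : Bornology.IsBounded Ω)
    (hsub : ∀ w ∈ Ω, ∀ i, 0 ≤ w i) (hpos : ∃ w ∈ Ω, ∀ i, 0 < w i)
    (k : ℕ) (hk : 1 ≤ k) :
    (specSet d Ω k).Nonempty ∧
    specSet d Ω k = Set.Ici (sInf (specSet d Ω k)) ∧
    0 < sInf (specSet d Ω k) ∧
    sInf (specSet d Ω k) ∈ specSet d Ω k := by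
  obtain ⟨R, hR⟩ := hbdd.exists_norm_le
  set F : (Fin d → ℕ) → ℝ := fun n => sSup ((fun ζ => ∑ i, (n i : ℝ) * ζ i) '' Ω) with hF
  set N : Set (Fin d → ℕ) := {n | ∑ i, n i = k} with hN
  -- bddAbove of images
  have hbd : ∀ n : Fin d → ℕ, BddAbove ((fun ζ => ∑ i, (n i : ℝ) * ζ i) '' Ω) := by
    intro n
    refine ⟨∑ i, (n i : ℝ) * |R|, ?_⟩
    rintro x ⟨ζ, hζ, rfl⟩
    apply Finset.sum_le_sum
    intro i _
    have h1 : ζ i ≤ |R| := by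
      calc ζ i ≤ |ζ i| := le_abs_self _
        _ = ‖ζ i‖ := (Real.norm_eq_abs _).symm
        _ ≤ ‖ζ‖ := norm_le_pi_norm ζ i
        _ ≤ R := hR ζ hζ
        _ ≤ |R| := le_abs_self R
    exact mul_le_mul_of_nonneg_left h1 (Nat.cast_nonneg _)
  have hbne : ∀ n : Fin d → ℕ, ((fun ζ => ∑ i, (n i : ℝ) * ζ i) '' Ω).Nonempty :=
    fun n => hne.image _
  have hle : ∀ (n : Fin d → ℕ) (ζ) (_ : ζ ∈ Ω), ∑ i, (n i : ℝ) * ζ i ≤ F n :=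
    fun n ζ hζ => le_csSup (hbd n) ⟨ζ, hζ, rfl⟩
  -- positivity of F on N
  obtain ⟨w, hwΩ, hw⟩ := hpos
  have hFpos : ∀ n ∈ N, 0 < F n := by
    intro n hn
    have hex : ∃ i, 0 < n i := by
      by_contra h
      push_neg at h
      have : ∑ i, n i = 0 := Finset.sum_eq_zero (fun i _ => by have := h i; omega)
      simp only [hN, Set.mem_setOf_eq] at hn; omega
    obtain ⟨i, hi⟩ := hex
    have : (0:ℝ) < ∑ j, (n j : ℝ) * w j := by
      apply Finset.sum_pos' (fun j _ => mul_nonneg (Nat.cast_nonneg _) (hw j).le)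
      exact ⟨i, Finset.mem_univ i, mul_pos (by exact_mod_cast hi) (hw i)⟩
    exact lt_of_lt_of_le this (hle n w hwΩ)
  -- membership characterization
  have hmem : ∀ T, T ∈ specSet d Ω k ↔ ∃ n ∈ N, F n ≤ T := by
    intro T
    constructor
    · rintro ⟨hT0, z, hz, hzT, hzk⟩
      set m : Fin d → ℕ := fun i => (⌊-(z i)⌋).toNat with hm
      have hfl : ∀ i, (m i : ℤ) = ⌊-(z i)⌋ := by
        intro i
        exact Int.toNat_of_nonneg (Int.floor_nonneg.mpr (by linarith [hz i]))
      have hkm : k ≤ ∑ i, m i := by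
        have h : (k:ℤ) ≤ ∑ i, (m i : ℤ) := by
          rw [Finset.sum_congr rfl (fun i _ => hfl i)]; exact hzk
        exact_mod_cast h
      obtain ⟨n, hnm, hnk⟩ := shrink_aux (∑ i, m i) d k m rfl hkm
      refine ⟨n, hnk, csSup_le (hbne n) ?_⟩
      rintro x ⟨ζ, hζ, rfl⟩
      have h1 : ∑ i, (n i : ℝ) * ζ i ≤ ∑ i, (-(z i)) * ζ i := by
        apply Finset.sum_le_sum
        intro i _
        apply mul_le_mul_of_nonneg_right _ (hsub ζ hζ i)
        calc (n i : ℝ) ≤ (m i : ℝ) := by exact_mod_cast hnm i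
          _ = ((⌊-(z i)⌋ : ℤ) : ℝ) := by exact_mod_cast congrArg Int.cast (hfl i)
          _ ≤ -(z i) := Int.floor_le _
      have h2 := hzT ζ hζ
      have : ∑ i, (-(z i)) * ζ i = -∑ i, z i * ζ i := by
        rw [← Finset.sum_neg_distrib]; congr 1; ext i; ring
      linarith [h1, h2, this ▸ h1]
    · rintro ⟨n, hn, hFn⟩
      obtain ⟨ζ₀, hζ₀⟩ := hne
      have hT0 : 0 ≤ T := by
        have h1 : 0 ≤ ∑ i, (n i : ℝ) * ζ₀ i :=
          Finset.sum_nonneg (fun i _ => mul_nonneg (Nat.cast_nonneg _) (hsub ζ₀ hζ₀ i))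
        linarith [hle n ζ₀ hζ₀]
      refine ⟨hT0, fun i => -(n i : ℝ), fun i => neg_nonpos.mpr (Nat.cast_nonneg _), ?_, ?_⟩
      · intro ζ hζ
        have h1 := hle n ζ hζ
        have : ∑ i, -(n i : ℝ) * ζ i = -∑ i, (n i : ℝ) * ζ i := by
          rw [← Finset.sum_neg_distrib]; congr 1; ext i; ring
        rw [this]; linarith
      · have : ∀ i, ⌊-(-(n i : ℝ))⌋ = (n i : ℤ) := by
          intro i; rw [neg_neg]; exact_mod_cast Int.floor_natCast (n i)
        rw [Finset.sum_congr rfl (fun i _ => this i)]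
        simp only [hN, Set.mem_setOf_eq] at hn
        exact_mod_cast le_of_eq hn.symm
  -- N finite and nonempty
  have hNfin : N.Finite := by
    apply Set.Finite.subset (Set.Finite.pi (fun i : Fin d => Set.finite_Iic k))
    intro n hn
    simp only [hN, Set.mem_setOf_eq] at hn
    intro i _
    simp only [Set.mem_Iic]
    calc n i ≤ ∑ j, n j := Finset.single_le_sum (fun j _ => Nat.zero_le _) (Finset.mem_univ i)
      _ = k := hn
  have hNne : N.Nonempty := by
    refine ⟨Pi.single ⟨0, hd⟩ k, ?_⟩
    simp [hN]
  obtain ⟨n₀, hn₀N, hn₀min⟩ := Set.exists_min_image N F hNfin hNne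
  have hS : specSet d Ω k = Set.Ici (F n₀) := by
    ext T
    rw [hmem T, Set.mem_Ici]
    constructor
    · rintro ⟨n, hn, hFn⟩; exact le_trans (hn₀min n hn) hFn
    · intro h; exact ⟨n₀, hn₀N, h⟩
  have hinf : sInf (specSet d Ω k) = F n₀ := by rw [hS, csInf_Ici]
  refine ⟨⟨F n₀, by rw [hS]; exact Set.self_mem_Ici⟩, ?_, ?_, ?_⟩
  · rw [hinf]; exact hS
  · rw [hinf]; exact hFpos n₀ hn₀N
  · rw [hinf, hS]; exact Set.self_mem_Ici
end
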